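/- Let α ∈ ℝ, let λ₁ = ξ + iη with ξ ≠ 0 and η ≠ 0, and set λ̂₁ = −λ₁. Assume iα + 2λ₁ ≠ 0, and set F = (iα − 2λ₁)/(iα + 2λ₁). Let u₁, v₁, û₁, v̂₁ ∈ ℂ∖{0} satisfy û₁/v̂₁ = F · (u₁/v₁). Define C₁ = −(v₁/u₁) · (λ₁ − λ₁*)(λ₁ − λ̂₁)/(λ₁ − λ̂₁*) and C₂ = −(û₁*/(−v̂₁*)) · (λ̂₁* − λ₁*)(λ̂₁* − λ̂₁)/(λ̂₁* − λ₁). Then C₁ · C₂* = −4λ₁² · F · η²/ξ². -/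

import Mathlib

open Complex

/-! With `λ̂₁ = -λ₁`, the spectral factor of `C₁` is `A = 2iηλ₁/ξ`, and the conjugate of the
spectral factor of `C₂` is `-A`. Hence `C₁ C₂* = (v₁/u₁)(û₁/v̂₁) A²`, and the boundary relation
turns the product of the eigenvector ratios into `F`. -/

open ComplexConjugate

namespace Complex

theorem sub_mul_sub_neg_div_sub_conj_neg (z : ℂ) :
    (z - conj z) * (z - -z) / (z - conj (-z)) = 2 * z.im * I * z / z.re := by
  have hre : z - conj (-z) = 2 * z.re := by
    rw [map_neg, sub_neg_eq_add, add_conj]; push_cast; ring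
  rw [sub_conj, hre, sub_neg_eq_add]
  push_cast
  rcases eq_or_ne (z.re : ℂ) 0 with h | h
  · simp [h]
  · field_simp; ring

theorem conj_conj_neg_sub_mul_sub_div_sub (z : ℂ) :
    conj ((conj (-z) - conj z) * (conj (-z) - -z) / (conj (-z) - z)) =
      -(2 * z.im * I * z / z.re) := by
  have hnum : (-z - z) * (-z - -conj z) = (z - conj z) * (z - -z) := by ring
  have hden : -z - conj z = -(z - conj (-z)) := by rw [map_neg]; ring
  simp only [map_div₀, map_mul, map_sub, map_neg, conj_conj]
  rw [hnum, hden, div_neg, sub_mul_sub_neg_div_sub_conj_neg]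

end Complex

theorem weights_product_robin_bc_general (ξ η : ℝ)
    (lam₁ lamh₁ : ℂ) (hlam₁ : lam₁ = (ξ : ℂ) + (η : ℂ) * I) (hlamh₁ : lamh₁ = -lam₁)
    (F : ℂ)
    (u₁ v₁ uh₁ vh₁ : ℂ) (hu₁ : u₁ ≠ 0) (hv₁ : v₁ ≠ 0)
    (hratio : uh₁ / vh₁ = F * (u₁ / v₁))
    (C₁ C₂ : ℂ)
    (hC₁ : C₁ = -(v₁ / u₁) * ((lam₁ - starRingEnd ℂ lam₁) * (lam₁ - lamh₁) /
      (lam₁ - starRingEnd ℂ lamh₁)))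
    (hC₂ : C₂ = -(starRingEnd ℂ uh₁ / (-(starRingEnd ℂ vh₁))) *
      ((starRingEnd ℂ lamh₁ - starRingEnd ℂ lam₁) * (starRingEnd ℂ lamh₁ - lamh₁) /
        (starRingEnd ℂ lamh₁ - lam₁))) :
    C₁ * starRingEnd ℂ C₂ = -4 * lam₁ ^ 2 * F * ((η : ℂ) ^ 2 / (ξ : ℂ) ^ 2) := by
  subst hlamh₁
  set A := 2 * lam₁.im * I * lam₁ / lam₁.re
  have hC₁' : C₁ = -(v₁ / u₁) * A := by
    rw [hC₁, sub_mul_sub_neg_div_sub_conj_neg]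
  have hC₂' : conj C₂ = uh₁ / vh₁ * -A := by
    rw [hC₂, map_mul, conj_conj_neg_sub_mul_sub_div_sub]
    simp only [map_div₀, conj_conj, div_neg, neg_neg, A]
  have hA : A ^ 2 = -4 * lam₁ ^ 2 * ((η : ℂ) ^ 2 / (ξ : ℂ) ^ 2) := by
    simp only [A, hlam₁, add_re, ofReal_re, mul_re, I_re, mul_zero, ofReal_im, I_im, mul_one,
      sub_self, add_zero, add_im, mul_im, zero_add]
    linear_combination (4 * (η : ℂ) ^ 2 * ((ξ : ℂ) + η * I) ^ 2 / (ξ : ℂ) ^ 2) * I_sq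
  calc C₁ * conj C₂ = v₁ / u₁ * (uh₁ / vh₁) * A ^ 2 := by rw [hC₁', hC₂']; ring
    _ = F * A ^ 2 := by rw [hratio]; field_simp
    _ = -4 * lam₁ ^ 2 * F * ((η : ℂ) ^ 2 / (ξ : ℂ) ^ 2) := by rw [hA]; ring

/-- Product relation for the norming constants of the two-soliton solution obtained by
dressing the zero seed with the pair `λ₁`, `λ̂₁* = −λ₁*`, subject to the Robin boundary
condition `u_x(t,0) = α u(t,0)`. -/
theorem weights_product_robin_bc (α ξ η : ℝ) (hξ : ξ ≠ 0) (hη : η ≠ 0)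
    (lam₁ lamh₁ : ℂ) (hlam₁ : lam₁ = (ξ : ℂ) + (η : ℂ) * I) (hlamh₁ : lamh₁ = -lam₁)
    (hden : I * (α : ℂ) + 2 * lam₁ ≠ 0)
    (F : ℂ)
    (hF : F = (I * (α : ℂ) - 2 * lam₁) / (I * (α : ℂ) + 2 * lam₁))
    (u₁ v₁ uh₁ vh₁ : ℂ) (hu₁ : u₁ ≠ 0) (hv₁ : v₁ ≠ 0) (huh₁ : uh₁ ≠ 0) (hvh₁ : vh₁ ≠ 0)
    (hratio : uh₁ / vh₁ = F * (u₁ / v₁))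
    (C₁ C₂ : ℂ)
    (hC₁ : C₁ = -(v₁ / u₁) * ((lam₁ - starRingEnd ℂ lam₁) * (lam₁ - lamh₁) /
      (lam₁ - starRingEnd ℂ lamh₁)))
    (hC₂ : C₂ = -(starRingEnd ℂ uh₁ / (-(starRingEnd ℂ vh₁))) *
      ((starRingEnd ℂ lamh₁ - starRingEnd ℂ lam₁) * (starRingEnd ℂ lamh₁ - lamh₁) /
        (starRingEnd ℂ lamh₁ - lam₁))) :
    C₁ * starRingEnd ℂ C₂ = -4 * lam₁ ^ 2 * F * ((η : ℂ) ^ 2 / (ξ : ℂ) ^ 2) :=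
  weights_product_robin_bc_general ξ η lam₁ lamh₁ hlam₁ hlamh₁ F u₁ v₁ uh₁ vh₁ hu₁ hv₁ hratio C₁ C₂
    hC₁ hC₂
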